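/- Let M be a smooth manifold with an affine connection ∇ and let s : M → M be a smooth map fixing a point x with T_x s = -id on T_x M and s an affine transformation of ∇. Then x is an isolated fixed point of s. -/

import Mathlib

/-- Let `M` (here a real normed space, chart-free manifold) carry an affine
connection `Γ`, and let `s` be a smooth diffeomorphism fixing `x` with `T_x s = -id` which
is an affine transformation of the connection (maps geodesics to geodesics).
Then `x` is an isolated fixed point of `s`. -/
theorem isolated_fixed_point_of_affine_symmetry
    {E : Type*} [NormedAddCommGroup E] [NormedSpace ℝ E]
    (Γ : E → E →L[ℝ] E →L[ℝ] E)
    (s : E → E) (hs : ContDiff ℝ (⊤ : ℕ∞) s) (hsbij : Function.Bijective s)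
    (x : E) (hx : s x = x)
    (hdx : fderiv ℝ s x = -ContinuousLinearMap.id ℝ E)
    (haff : ∀ γ : ℝ → E, (∀ t, HasDerivAt γ (deriv γ t) t) →
      (∀ t, deriv (deriv γ) t + Γ (γ t) (deriv γ t) (deriv γ t) = 0) →
      ∀ t, deriv (deriv (s ∘ γ)) t + Γ ((s ∘ γ) t) (deriv (s ∘ γ) t) (deriv (s ∘ γ) t) = 0) :
    ∃ U ∈ nhds x, ∀ y ∈ U, s y = y → y = x := by
  classical
  -- Consider f y = s y - y; it has strict derivative -2·id at x, which is invertible.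
  set e : E ≃L[ℝ] E :=
    { LinearEquiv.smulOfNeZero ℝ E (-2 : ℝ) (by norm_num) with
      continuous_toFun := continuous_const_smul _
      continuous_invFun := continuous_const_smul _ } with he
  have hsd : HasStrictFDerivAt s (fderiv ℝ s x) x :=
    (hs.contDiffAt.hasStrictFDerivAt (by simp))
  have hf : HasStrictFDerivAt (fun y => s y - y) (e : E →L[ℝ] E) x := by
    have h1 : HasStrictFDerivAt (fun y => s y - y)
        (fderiv ℝ s x - ContinuousLinearMap.id ℝ E) x :=
      hsd.sub (hasStrictFDerivAt_id x)
    convert h1 using 1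
    rw [hdx]
    ext v
    show (-2 : ℝ) • v = _
    simp [two_smul]
    abel
  rcases subsingleton_or_nontrivial E with hE | hE
  · exact ⟨Set.univ, Filter.univ_mem, fun y _ _ => Subsingleton.elim y x⟩
  · set N : NNReal := ‖(e.symm : E →L[ℝ] E)‖₊ with hN
    have hNpos : 0 < N := by
      rcases exists_ne (0 : E) with ⟨v, hv⟩
      have : e.symm v ≠ 0 := by
        simp only [ne_eq, EmbeddingLike.map_eq_zero_iff]
        exact hv
      have h0 : (e.symm : E →L[ℝ] E) ≠ 0 := by
        intro h
        apply this
        have := ContinuousLinearMap.ext_iff.1 h v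
        simpa using this
      simpa [hN] using h0
    have hNinv : 0 < N⁻¹ := by positivity
    obtain ⟨U, hU, hUa⟩ := hf.approximates_deriv_on_nhds (c := N⁻¹ / 2)
      (Or.inr (by positivity))
    have hc : Subsingleton E ∨ N⁻¹ / 2 < N⁻¹ := by
      right
      exact NNReal.half_lt_self (ne_of_gt hNinv)
    have hinj : Set.InjOn (fun y => s y - y) U := hUa.injOn hc
    refine ⟨U, hU, fun y hy hsy => ?_⟩
    have hxU : x ∈ U := mem_of_mem_nhds hU
    apply hinj hy hxU
    simp [hsy, hx]
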